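/- (Corollary 3) Let Γ and Σ be disjoint finite simple graphs, let Σ_c be an induced subgraph of Σ, fix distinct vertices p_1, …, p_k ∈ Γ, and let Γ^Σ be the graph consisting of Γ, Σ, and additional edges joining each p_l (l = 1,…,k) to every vertex of Σ_c. Assume every vertex of Γ^Σ has positive degree. Suppose a nonzero function f on V(Σ) satisfies (1/n_i)·∑_{j ∈ Σ, j ∼ i} f(j) = (1−λ)·f(i) for all i ∈ Σ and some real λ, where n_i is the degree of i in Γ^Σ, and moreover ∑_{j ∈ Σ_c} f(j) = 0. Then the function equal to f on V(Σ) and 0 on V(Γ) is an eigenfunction of the normalized Laplacian of Γ^Σ for the eigenvalue λ. -/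

import Mathlib

open Finset

variable {V W : Type*}

/-- `f` is an eigenfunction of the normalized graph Laplacian of `G` for the eigenvalue `μ`:
`f` is nonzero and `∑_{j ∼ i} f j = (1 - μ) · deg i · f i` for every vertex `i`. -/
def SimpleGraph.IsLapEigenfunction [Fintype V] (G : SimpleGraph V) [DecidableRel G.Adj]
    (μ : ℝ) (f : V → ℝ) : Prop :=
  f ≠ 0 ∧ ∀ i, ∑ j ∈ G.neighborFinset i, f j = (1 - μ) * (G.degree i : ℝ) * f i

/-- `μ` is an eigenvalue of the normalized graph Laplacian of `G`. -/
def SimpleGraph.IsLapEigenvalue [Fintype V] (G : SimpleGraph V) [DecidableRel G.Adj]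
    (μ : ℝ) : Prop :=
  ∃ f : V → ℝ, G.IsLapEigenfunction μ f

/-- Coupling: the disjoint union of `G` and `H` together with additional edges joining,
for each `l : Fin k`, the vertex `p l` of `G` to every vertex of `H` lying in `c l`. -/
def SimpleGraph.coupleMulti [DecidableEq V] {k : ℕ} (G : SimpleGraph V) (H : SimpleGraph W)
    (p : Fin k → V) (c : Fin k → Finset W) : SimpleGraph (V ⊕ W) where
  Adj x y :=
    match x, y with
    | Sum.inl a, Sum.inl b => G.Adj a b
    | Sum.inl a, Sum.inr b => ∃ l, a = p l ∧ b ∈ c l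
    | Sum.inr a, Sum.inl b => ∃ l, b = p l ∧ a ∈ c l
    | Sum.inr a, Sum.inr b => H.Adj a b
  symm := by
    constructor
    rintro (a | a) (b | b) h
    · exact G.adj_symm h
    · exact h
    · exact h
    · exact H.adj_symm h
  loopless := by
    constructor
    rintro (a | a) h
    · exact G.irrefl h
    · exact H.irrefl h

instance [DecidableEq V] [DecidableEq W] {k : ℕ} (G : SimpleGraph V) (H : SimpleGraph W)
    [DecidableRel G.Adj] [DecidableRel H.Adj] (p : Fin k → V) (c : Fin k → Finset W) :
    DecidableRel (G.coupleMulti H p c).Adj := fun x y =>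
  match x, y with
  | Sum.inl a, Sum.inl b => inferInstanceAs (Decidable (G.Adj a b))
  | Sum.inl a, Sum.inr b => inferInstanceAs (Decidable (∃ l, a = p l ∧ b ∈ c l))
  | Sum.inr a, Sum.inl b => inferInstanceAs (Decidable (∃ l, b = p l ∧ a ∈ c l))
  | Sum.inr a, Sum.inr b => inferInstanceAs (Decidable (H.Adj a b))

/-- **Corollary 3.** Join each of the distinct vertices `p 1, …, p k` of `Γ`
to every vertex of an induced subgraph `Σ_c` (vertex set `c`) of a disjoint graph `Σ`.
If a nonzero `f` on `V(Σ)` satisfies the motif eigenvalue equation for `λ` (degrees taken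
in the coupled graph) and `∑_{j ∈ c} f j = 0`, then the extension of `f` by `0` on `V(Γ)`
is an eigenfunction of the normalized Laplacian of the coupled graph for `λ`. -/
theorem coupleMulti_const_isLapEigenfunction
    {V W : Type*} [Fintype V] [Fintype W] [DecidableEq V] [DecidableEq W]
    (G : SimpleGraph V) (H : SimpleGraph W) [DecidableRel G.Adj] [DecidableRel H.Adj]
    (k : ℕ) (p : Fin k → V) (hp : Function.Injective p) (c : Finset W) (lam : ℝ)
    (hdeg : ∀ x, 0 < (G.coupleMulti H p (fun _ => c)).degree x)
    (f : W → ℝ) (hne : f ≠ 0)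
    (heq : ∀ i : W, ∑ j ∈ H.neighborFinset i, f j
      = (1 - lam) * ((G.coupleMulti H p (fun _ => c)).degree (Sum.inr i) : ℝ) * f i)
    (hc : ∑ j ∈ c, f j = 0) :
    (G.coupleMulti H p (fun _ => c)).IsLapEigenfunction lam (Sum.elim 0 f) := by
  constructor
  · intro h
    apply hne
    funext w
    have := congrFun h (Sum.inr w)
    simpa using this
  · intro x
    have key : ∀ (y : V ⊕ W) (g : V ⊕ W → ℝ),
        ∑ j ∈ (G.coupleMulti H p (fun _ => c)).neighborFinset y, g j
        = ∑ b : V, (if (G.coupleMulti H p (fun _ => c)).Adj y (Sum.inl b) then g (Sum.inl b) else 0)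
        + ∑ b : W, (if (G.coupleMulti H p (fun _ => c)).Adj y (Sum.inr b) then g (Sum.inr b) else 0) := by
      intro y g
      have h1 : ((G.coupleMulti H p (fun _ => c)).neighborSet y).toFinset
          = Finset.univ.filter (fun j => (G.coupleMulti H p (fun _ => c)).Adj y j) := by
        ext j; rw [Set.mem_toFinset]; simp [SimpleGraph.neighborSet]
      rw [SimpleGraph.neighborFinset, h1, Finset.sum_filter, Fintype.sum_sum_type]
    cases x with
    | inl a =>
      rw [key]
      simp only [Sum.elim_inl, Sum.elim_inr, Pi.zero_apply, ite_self, Finset.sum_const_zero,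
        zero_add, mul_zero]
      have : ∀ b : W, (G.coupleMulti H p (fun _ => c)).Adj (Sum.inl a) (Sum.inr b)
          ↔ (∃ l, a = p l) ∧ b ∈ c := by
        intro b
        constructor
        · rintro ⟨l, h1, h2⟩; exact ⟨⟨l, h1⟩, h2⟩
        · rintro ⟨⟨l, h1⟩, h2⟩; exact ⟨l, h1, h2⟩
      simp only [this]
      by_cases hP : ∃ l, a = p l
      · simp only [hP, true_and]
        rw [← Finset.sum_filter]
        simpa using hc
      · simp [hP]
    | inr i =>
      rw [key]
      simp only [Sum.elim_inl, Sum.elim_inr, Pi.zero_apply, ite_self, Finset.sum_const_zero,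
        zero_add]
      have : ∀ b : W, (G.coupleMulti H p (fun _ => c)).Adj (Sum.inr i) (Sum.inr b)
          ↔ H.Adj i b := fun b => Iff.rfl
      simp only [this]
      rw [← Finset.sum_filter]
      have : Finset.univ.filter (fun b => H.Adj i b) = H.neighborFinset i := by
        ext b; simp
      rw [this]
      exact heq i
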